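/- There exists a DDR strategy (in the one-state game with two actions) that is not outcome-equivalent to any RRD strategy. -/

import Mathlib

open Filter
open scoped Classical

/-- A stochastic Mealy machine for the one-state game with two actions
(`true` = action a, `false` = action b). -/
structure OneMealy (n : ℕ) where
  init : Fin n → ℝ
  next : Fin n → Bool → ℝ
  up : Fin n → Bool → Fin n → ℝ

def Proper {n : ℕ} (N : OneMealy n) : Prop :=
  (∀ m, 0 ≤ N.init m) ∧ (∑ m, N.init m) = 1 ∧
  (∀ m c, 0 ≤ N.next m c) ∧ (∀ m, ∑ c, N.next m c = 1) ∧
  (∀ m c m', 0 ≤ N.up m c m') ∧ ∀ m c, ∑ m', N.up m c m' = 1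

def IsDirac {α : Type} (μ : α → ℝ) : Prop := ∃ x, ∀ y, μ y = if y = x then 1 else 0

def DetInit {n : ℕ} (N : OneMealy n) : Prop := IsDirac N.init
def DetNext {n : ℕ} (N : OneMealy n) : Prop := ∀ m, IsDirac (N.next m)
def DetUp {n : ℕ} (N : OneMealy n) : Prop := ∀ m c, IsDirac (N.up m c)

/-- Bayesian update of the memory distribution upon playing action `c`. -/
noncomputable def ostep {n : ℕ} (N : OneMealy n) (μ : Fin n → ℝ) (c : Bool) :
    Fin n → ℝ :=
  if (∑ m', μ m' * N.next m' c) = 0 then fun m => ∑ m', μ m' * N.up m' c m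
  else fun m => (∑ m', μ m' * N.up m' c m * N.next m' c) / (∑ m', μ m' * N.next m' c)

/-- Distribution over memory states after the word `w` of actions. -/
noncomputable def omemDist {n : ℕ} (N : OneMealy n) (w : List Bool) : Fin n → ℝ :=
  w.foldl (ostep N) N.init

/-- The strategy induced by the machine. -/
noncomputable def oStrat {n : ℕ} (N : OneMealy n) (w : List Bool) (c : Bool) : ℝ :=
  ∑ m, omemDist N w m * N.next m c

/-- Probability of the cylinder of the finite action word `l` under strategy `σ`. -/
def cylProb (σ : List Bool → Bool → ℝ) (l : List Bool) : ℝ :=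
  ∏ i ∈ Finset.range l.length, σ (l.take i) (l.getD i false)

/-- Outcome equivalence in the one-state game: identical cylinder probabilities. -/
noncomputable def OEquiv {n k : ℕ} (N : OneMealy n) (B : OneMealy k) : Prop :=
  ∀ w : List Bool, cylProb (oStrat N) w = cylProb (oStrat B) w

/-- Consistency of an action word with a strategy. -/
def consistentW (σ : List Bool → Bool → ℝ) (w : List Bool) : Prop :=
  ∀ i < w.length, 0 < σ (w.take i) (w.getD i false)

/-!
The witness plays `b` at the start and after every `a`; after each such `b` it commits with
probability `1/2` to playing `b` forever, and otherwise plays `a` with positive probability at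
every later step. For a machine `B` with deterministic updates each memory state has a single
successor, so the support of the memory distribution can only shrink along a consistent play.
Along the extensions by `b`s of a consistent play with minimal support, `a` stays playable and
the support cannot shrink after it, so every support state plays `a` with positive probability
and hence `b` with probability at most some `β < 1`. Thus `B` gives `j` further `b`s
probability `O(βʲ)`, whereas the witness gives them at least the positive probability of the
commitment.
-/

open Finset Topology

section Words

variable (σ : List Bool → Bool → ℝ)

lemma cylProb_append_singleton (w : List Bool) (c : Bool) :
    cylProb σ (w ++ [c]) = cylProb σ w * σ w c := by
  unfold cylProb
  rw [List.length_append, List.length_singleton, prod_range_succ, List.take_left]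
  congr 1
  · refine prod_congr rfl fun i hi => ?_
    rw [mem_range] at hi
    rw [List.take_append_of_le_length hi.le, List.getD_eq_getElem?_getD,
      List.getD_eq_getElem?_getD, List.getElem?_append_left hi]
  · simp [List.getD]

variable {σ}

lemma consistentW_append_singleton_iff {w : List Bool} {c : Bool} :
    consistentW σ (w ++ [c]) ↔ consistentW σ w ∧ 0 < σ w c := by
  have hprefix : ∀ i < w.length,
      σ ((w ++ [c]).take i) ((w ++ [c]).getD i false) = σ (w.take i) (w.getD i false) := by
    intro i hi
    rw [List.take_append_of_le_length hi.le, List.getD_eq_getElem?_getD,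
      List.getD_eq_getElem?_getD, List.getElem?_append_left hi]
  have hlast : σ ((w ++ [c]).take w.length) ((w ++ [c]).getD w.length false) = σ w c := by
    rw [List.take_left, List.getD_eq_getElem?_getD, List.getElem?_concat_length]
    rfl
  constructor
  · intro h
    refine ⟨fun i hi => ?_, ?_⟩
    · rw [← hprefix i hi]
      exact h i (by simp; omega)
    · rw [← hlast]
      exact h w.length (by simp)
  · rintro ⟨hw, hc⟩ i hi
    rw [List.length_append, List.length_singleton] at hi
    rcases Nat.lt_succ_iff_lt_or_eq.mp hi with hi | rfl
    · rw [hprefix i hi]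
      exact hw i hi
    · rwa [hlast]

lemma consistentW_take {w : List Bool} (hw : consistentW σ w) (i : ℕ) :
    consistentW σ (w.take i) := by
  intro j hj
  rw [List.length_take, lt_min_iff] at hj
  rw [List.take_take, min_eq_left hj.1.le, List.getD_eq_getElem?_getD,
    List.getElem?_take_of_lt hj.1, ← List.getD_eq_getElem?_getD]
  exact hw j hj.2

lemma cylProb_pos {w : List Bool} (hw : consistentW σ w) : 0 < cylProb σ w :=
  prod_pos fun i hi => hw i (mem_range.mp hi)

end Words

section Machines

variable {n k : ℕ}

lemma omemDist_append_singleton (N : OneMealy n) (w : List Bool) (c : Bool) :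
    omemDist N (w ++ [c]) = ostep N (omemDist N w) c := by
  simp [omemDist, List.foldl_append]

lemma omemDist_nonneg {N : OneMealy n} (hN : Proper N) (w : List Bool) (m : Fin n) :
    0 ≤ omemDist N w m := by
  obtain ⟨hinit, -, hnext, -, hup, -⟩ := hN
  induction w using List.reverseRecOn generalizing m with
  | nil => exact hinit m
  | append_singleton w c ih =>
    rw [omemDist_append_singleton]
    unfold ostep
    split_ifs
    · exact sum_nonneg fun m' _ => mul_nonneg (ih m') (hup m' c m)
    · exact div_nonneg
        (sum_nonneg fun m' _ => mul_nonneg (mul_nonneg (ih m') (hup m' c m)) (hnext m' c))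
        (sum_nonneg fun m' _ => mul_nonneg (ih m') (hnext m' c))

lemma oStrat_nonneg {N : OneMealy n} (hN : Proper N) (w : List Bool) (c : Bool) :
    0 ≤ oStrat N w c :=
  sum_nonneg fun m _ => mul_nonneg (omemDist_nonneg hN w m) (hN.2.2.1 m c)

lemma sum_omemDist_eq_one {N : OneMealy n} (hN : Proper N) {w : List Bool}
    (hw : consistentW (oStrat N) w) : ∑ m, omemDist N w m = 1 := by
  obtain ⟨-, hinit, -, -, -, hup⟩ := hN
  induction w using List.reverseRecOn with
  | nil => exact hinit
  | append_singleton w c ih =>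
    obtain ⟨-, hc⟩ := consistentW_append_singleton_iff.mp hw
    have hne : ∑ m', omemDist N w m' * N.next m' c ≠ 0 := hc.ne'
    rw [omemDist_append_singleton, ostep, if_neg hne, ← sum_div, div_eq_one_iff_eq hne,
      sum_comm]
    refine sum_congr rfl fun m' _ => ?_
    rw [← sum_mul, ← mul_sum, hup m' c, mul_one]

lemma OEquiv.symm {N : OneMealy n} {B : OneMealy k} (h : OEquiv N B) : OEquiv B N :=
  fun w => (h w).symm

lemma OEquiv.oStrat_eq {N : OneMealy n} {B : OneMealy k} (h : OEquiv N B) {w : List Bool}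
    (hw : consistentW (oStrat N) w) (c : Bool) : oStrat B w c = oStrat N w c := by
  have hc := h (w ++ [c])
  rw [cylProb_append_singleton, cylProb_append_singleton, h w] at hc
  have hpos : 0 < cylProb (oStrat B) w := h w ▸ cylProb_pos hw
  exact (mul_left_cancel₀ hpos.ne' hc).symm

lemma consistentW_of_oEquiv {N : OneMealy n} {B : OneMealy k} (h : OEquiv N B)
    {w : List Bool} (hw : consistentW (oStrat N) w) : consistentW (oStrat B) w := by
  intro i hi
  rw [h.oStrat_eq (consistentW_take hw i)]
  exact hw i hi

end Machines

section Support

variable {k : ℕ} (B : OneMealy k)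

noncomputable def omemSupp (w : List Bool) : Finset (Fin k) :=
  univ.filter fun m => omemDist B w m ≠ 0

def IsMinSupp (w : List Bool) : Prop :=
  consistentW (oStrat B) w ∧
    ∀ w', consistentW (oStrat B) w' → #(omemSupp B w) ≤ #(omemSupp B w')

lemma exists_isMinSupp : ∃ w, IsMinSupp B w := by
  obtain ⟨w, hw, hmin⟩ := (InvImage.wf (fun w => #(omemSupp B w)) wellFounded_lt).has_min
    {w | consistentW (oStrat B) w} ⟨[], fun i hi => absurd hi (Nat.not_lt_zero i)⟩
  exact ⟨w, hw, fun w' hw' => not_lt.mp (hmin w' hw')⟩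

variable {B}

lemma card_omemSupp_append_singleton_le (hdet : DetUp B) {w : List Bool} {c : Bool}
    (hc : oStrat B w c ≠ 0) :
    #(omemSupp B (w ++ [c])) ≤ #((omemSupp B w).filter fun m => B.next m c ≠ 0) := by
  choose f hf using hdet
  refine (card_le_card (t := ((omemSupp B w).filter fun m => B.next m c ≠ 0).image
    (f · c)) fun m hm => ?_).trans card_image_le
  have hnorm : ∑ m', omemDist B w m' * B.next m' c ≠ 0 := hc
  rw [omemSupp, mem_filter, omemDist_append_singleton, ostep, if_neg hnorm] at hm
  obtain ⟨m', -, hm'⟩ := exists_ne_zero_of_sum_ne_zero (div_ne_zero_iff.mp hm.2).1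
  obtain ⟨hμup, hnext⟩ := mul_ne_zero_iff.mp hm'
  obtain ⟨hμ, hup⟩ := mul_ne_zero_iff.mp hμup
  have hm : m = f m' c := by
    by_contra h
    exact hup (by rw [hf, if_neg h])
  exact mem_image.mpr ⟨m', by simp [omemSupp, hμ, hnext], hm.symm⟩

lemma IsMinSupp.append_singleton (hdet : DetUp B) {w : List Bool} (hw : IsMinSupp B w)
    {c : Bool} (hwc : consistentW (oStrat B) (w ++ [c])) : IsMinSupp B (w ++ [c]) :=
  ⟨hwc, fun w' hw' => ((card_omemSupp_append_singleton_le hdet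
    (consistentW_append_singleton_iff.mp hwc).2.ne').trans (card_filter_le _ _)).trans
      (hw.2 w' hw')⟩

lemma IsMinSupp.next_ne_zero (hdet : DetUp B) {w : List Bool} (hw : IsMinSupp B w)
    {c : Bool} (hwc : consistentW (oStrat B) (w ++ [c])) {m : Fin k}
    (hm : m ∈ omemSupp B w) : B.next m c ≠ 0 := by
  have hcard := (hw.2 _ hwc).trans
    (card_omemSupp_append_singleton_le hdet (consistentW_append_singleton_iff.mp hwc).2.ne')
  exact (card_filter_eq_iff.mp (le_antisymm (card_filter_le _ _) hcard)) m hm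

lemma exists_next_false_le_of_next_true_ne_zero (hB : Proper B) :
    ∃ β, 0 ≤ β ∧ β < 1 ∧ ∀ m, B.next m true ≠ 0 → B.next m false ≤ β := by
  obtain hP | hP := (univ.filter fun m => B.next m true ≠ 0).eq_empty_or_nonempty
  · refine ⟨0, le_rfl, one_pos, fun m hm => ?_⟩
    have hmP : m ∈ univ.filter fun m => B.next m true ≠ 0 := mem_filter.mpr ⟨mem_univ m, hm⟩
    simp [hP] at hmP
  · obtain ⟨m₀, hm₀, hmax⟩ := exists_max_image _ (fun m => B.next m false) hP
    refine ⟨B.next m₀ false, hB.2.2.1 m₀ false, ?_,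
      fun m hm => hmax m (mem_filter.mpr ⟨mem_univ m, hm⟩)⟩
    have hsum : B.next m₀ true + B.next m₀ false = 1 := by
      simpa [Fintype.sum_bool] using hB.2.2.2.1 m₀
    have htrue : 0 < B.next m₀ true := (hB.2.2.1 m₀ true).lt_of_ne' (mem_filter.mp hm₀).2
    linarith

lemma IsMinSupp.tendsto_cylProb_replicate_false (hB : Proper B) (hdet : DetUp B)
    {w : List Bool} (hw : IsMinSupp B w)
    (htrue : ∀ j, consistentW (oStrat B) (w ++ List.replicate j false ++ [true])) :
    Tendsto (fun j => cylProb (oStrat B) (w ++ List.replicate j false)) atTop (𝓝 0) := by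
  have hsucc (j : ℕ) :
      w ++ List.replicate (j + 1) false = w ++ List.replicate j false ++ [false] := by
    simp [List.replicate_succ']
  have hcons (j : ℕ) : consistentW (oStrat B) (w ++ List.replicate j false) :=
    (consistentW_append_singleton_iff.mp (htrue j)).1
  have hmin (j : ℕ) : IsMinSupp B (w ++ List.replicate j false) := by
    induction j with
    | zero => simpa using hw
    | succ j ih => exact hsucc j ▸ ih.append_singleton hdet (hsucc j ▸ hcons (j + 1))
  obtain ⟨β, hβ0, hβ1, hβ⟩ := exists_next_false_le_of_next_true_ne_zero hB
  have hfalse (j : ℕ) : oStrat B (w ++ List.replicate j false) false ≤ β := by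
    set μ := omemDist B (w ++ List.replicate j false)
    calc oStrat B (w ++ List.replicate j false) false = ∑ m, μ m * B.next m false := rfl
      _ ≤ ∑ m, μ m * β := sum_le_sum fun m _ => ?_
      _ = β := by rw [← sum_mul, sum_omemDist_eq_one hB (hcons j), one_mul]
    by_cases hm : μ m = 0
    · simp [hm]
    · exact mul_le_mul_of_nonneg_left
        (hβ m ((hmin j).next_ne_zero hdet (htrue j) (by simp [omemSupp, μ, hm])))
        (omemDist_nonneg hB _ m)
  have hbound (j : ℕ) :
      cylProb (oStrat B) (w ++ List.replicate j false) ≤ cylProb (oStrat B) w * β ^ j := by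
    induction j with
    | zero => simp
    | succ j ih =>
      rw [hsucc, cylProb_append_singleton, pow_succ, ← mul_assoc]
      exact mul_le_mul ih (hfalse j) (oStrat_nonneg hB _ _)
        (mul_nonneg (cylProb_pos hw.1).le (pow_nonneg hβ0 _))
  have hgeom : Tendsto (fun j => cylProb (oStrat B) w * β ^ j) atTop (𝓝 0) := by
    simpa using (tendsto_pow_atTop_nhds_zero_of_lt_one hβ0 hβ1).const_mul (cylProb (oStrat B) w)
  exact squeeze_zero (fun j => (cylProb_pos (hcons j)).le) hbound hgeom

end Support
section Witness

/-- States `0` and `3` are the paper's `m1` and `m3`. The paper's `m2`, which plays `a` and `b`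
with probability `1/2` each, is split into state `1` (plays `a`) and state `2` (plays `b`),
entered with equal probability, so that every output is deterministic. -/
noncomputable def witness : OneMealy 4 where
  init := ![1, 0, 0, 0]
  next m c := if c then ![0, 1, 0, 0] m else ![1, 0, 1, 1] m
  up m c :=
    if c then ![![1, 0, 0, 0], ![1, 0, 0, 0], ![1, 0, 0, 0], ![0, 0, 0, 1]] m
    else ![![0, 1/4, 1/4, 1/2], ![1, 0, 0, 0], ![0, 1/2, 1/2, 0], ![0, 0, 0, 1]] m

noncomputable def resetDist : Fin 4 → ℝ := ![1, 0, 0, 0]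

/-- The mass `1 - 2 * t` on the sink state `3` is the conditional probability that `a` is never
played again. -/
noncomputable def waitDist (t : ℝ) : Fin 4 → ℝ := ![0, t, t, 1 - 2 * t]

lemma witness_proper : Proper witness := by
  refine ⟨?_, ?_, ?_, ?_, ?_, ?_⟩
  · intro m; fin_cases m <;> simp [witness]
  · simp [witness, Fin.sum_univ_succ]
  · intro m c; fin_cases m <;> cases c <;> simp [witness]
  · intro m; fin_cases m <;> simp [witness]
  · intro m c m'; fin_cases m <;> cases c <;> fin_cases m' <;> norm_num [witness]
  · intro m c; fin_cases m <;> cases c <;> norm_num [witness, Fin.sum_univ_succ]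

lemma witness_detInit : DetInit witness :=
  ⟨0, fun m => by fin_cases m <;> simp [witness]⟩

lemma witness_detNext : DetNext witness :=
  fun m => ⟨decide (m = 1), fun c => by fin_cases m <;> cases c <;> simp [witness]⟩

lemma sum_resetDist_mul_next (c : Bool) :
    ∑ m, resetDist m * witness.next m c = if c then 0 else 1 := by
  cases c <;> simp [resetDist, witness, Fin.sum_univ_succ]

lemma sum_waitDist_mul_next (t : ℝ) (c : Bool) :
    ∑ m, waitDist t m * witness.next m c = if c then t else 1 - t := by
  cases c
  · simp [waitDist, witness, Fin.sum_univ_succ]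
    ring
  · simp [waitDist, witness, Fin.sum_univ_succ]

lemma ostep_resetDist_false : ostep witness resetDist false = waitDist (1/4) := by
  rw [ostep, sum_resetDist_mul_next, if_neg (by norm_num)]
  funext m
  fin_cases m <;> norm_num [resetDist, waitDist, witness, Fin.sum_univ_succ]

lemma ostep_waitDist_true {t : ℝ} (ht : t ≠ 0) :
    ostep witness (waitDist t) true = resetDist := by
  rw [ostep, sum_waitDist_mul_next, if_pos rfl, if_neg ht]
  funext m
  fin_cases m <;> simp [resetDist, waitDist, witness, Fin.sum_univ_succ, ht]

lemma ostep_waitDist_false {t : ℝ} (ht : t ≠ 1) :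
    ostep witness (waitDist t) false = waitDist (t / (2 * (1 - t))) := by
  have ht' : 1 - t ≠ 0 := sub_ne_zero.mpr ht.symm
  rw [ostep, sum_waitDist_mul_next, if_neg Bool.false_ne_true, if_neg ht']
  funext m
  fin_cases m <;> simp [waitDist, witness, Fin.sum_univ_succ] <;> field_simp
  ring

lemma div_two_mul_one_sub_mem_Ioo {t : ℝ} (ht : t ∈ Set.Ioo 0 (1/2)) :
    t / (2 * (1 - t)) ∈ Set.Ioo 0 (1/2) := by
  obtain ⟨ht0, ht1⟩ := ht
  exact ⟨div_pos ht0 (by linarith), by rw [div_lt_iff₀ (by linarith)]; linarith⟩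

variable {w : List Bool}

lemma witness_omemDist_cases (hw : consistentW (oStrat witness) w) :
    omemDist witness w = resetDist ∨
      ∃ t ∈ Set.Ioo 0 (1/2), omemDist witness w = waitDist t := by
  induction w using List.reverseRecOn with
  | nil => exact Or.inl rfl
  | append_singleton w c ih =>
    obtain ⟨hw, hc⟩ := consistentW_append_singleton_iff.mp hw
    rw [omemDist_append_singleton]
    rcases ih hw with h | ⟨t, ht, h⟩ <;> rw [h] <;> cases c
    · exact Or.inr ⟨1/4, by norm_num, ostep_resetDist_false⟩
    · simp [oStrat, h, sum_resetDist_mul_next] at hc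
    · exact Or.inr ⟨_, div_two_mul_one_sub_mem_Ioo ht,
        ostep_waitDist_false (ht.2.trans (by norm_num)).ne⟩
    · exact Or.inl (ostep_waitDist_true ht.1.ne')

lemma witness_step_false_of_waitDist (hw : consistentW (oStrat witness) w) {t : ℝ}
    (ht : t ∈ Set.Ioo 0 (1/2)) (hmem : omemDist witness w = waitDist t) :
    consistentW (oStrat witness) (w ++ [false]) ∧
      omemDist witness (w ++ [false]) = waitDist (t / (2 * (1 - t))) ∧
      cylProb (oStrat witness) (w ++ [false]) * (1 - 2 * (t / (2 * (1 - t)))) =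
        cylProb (oStrat witness) w * (1 - 2 * t) := by
  have hfalse : oStrat witness w false = 1 - t := by
    simp [oStrat, hmem, sum_waitDist_mul_next]
  have ht1 : 1 - t ≠ 0 := by linarith [ht.2]
  refine ⟨consistentW_append_singleton_iff.mpr ⟨hw, by linarith [ht.2]⟩, ?_, ?_⟩
  · rw [omemDist_append_singleton, hmem, ostep_waitDist_false (ht.2.trans (by norm_num)).ne]
  · rw [cylProb_append_singleton, hfalse]
    field_simp
    ring

lemma witness_exists_waitDist_append_false (hw : consistentW (oStrat witness) w) :
    ∃ t ∈ Set.Ioo 0 (1/2), consistentW (oStrat witness) (w ++ [false]) ∧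
      omemDist witness (w ++ [false]) = waitDist t := by
  rcases witness_omemDist_cases hw with h | ⟨t, ht, h⟩
  · refine ⟨1/4, by norm_num, consistentW_append_singleton_iff.mpr ⟨hw, ?_⟩,
      by rw [omemDist_append_singleton, h, ostep_resetDist_false]⟩
    simp [oStrat, h, sum_resetDist_mul_next]
  · obtain ⟨hcons, hmem, -⟩ := witness_step_false_of_waitDist hw ht h
    exact ⟨_, div_two_mul_one_sub_mem_Ioo ht, hcons, hmem⟩

lemma witness_replicate_false_of_waitDist (hw : consistentW (oStrat witness) w) {t : ℝ}
    (ht : t ∈ Set.Ioo 0 (1/2)) (hmem : omemDist witness w = waitDist t) (j : ℕ) :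
    ∃ s ∈ Set.Ioo 0 (1/2), consistentW (oStrat witness) (w ++ List.replicate j false) ∧
      omemDist witness (w ++ List.replicate j false) = waitDist s ∧
      cylProb (oStrat witness) (w ++ List.replicate j false) * (1 - 2 * s) =
        cylProb (oStrat witness) w * (1 - 2 * t) := by
  induction j with
  | zero => exact ⟨t, ht, by simpa using hw, by simpa using hmem, by simp⟩
  | succ j ih =>
    obtain ⟨s, hs, hcons, hmem', hcyl⟩ := ih
    obtain ⟨hcons', hmem'', hcyl'⟩ := witness_step_false_of_waitDist hcons hs hmem'
    have hsucc : w ++ List.replicate (j + 1) false = w ++ List.replicate j false ++ [false] := by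
      simp [List.replicate_succ']
    exact ⟨_, div_two_mul_one_sub_mem_Ioo hs, hsucc ▸ hcons', hsucc ▸ hmem'',
      hsucc ▸ hcyl'.trans hcyl⟩

lemma witness_consistentW_replicate_false_append_true (hw : consistentW (oStrat witness) w)
    {t : ℝ} (ht : t ∈ Set.Ioo 0 (1/2)) (hmem : omemDist witness w = waitDist t) (j : ℕ) :
    consistentW (oStrat witness) (w ++ List.replicate j false ++ [true]) := by
  obtain ⟨s, hs, hcons, hmem', -⟩ := witness_replicate_false_of_waitDist hw ht hmem j
  refine consistentW_append_singleton_iff.mpr ⟨hcons, ?_⟩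
  simpa [oStrat, hmem', sum_waitDist_mul_next] using hs.1

lemma witness_cylProb_replicate_false_ge (hw : consistentW (oStrat witness) w)
    {t : ℝ} (ht : t ∈ Set.Ioo 0 (1/2)) (hmem : omemDist witness w = waitDist t) (j : ℕ) :
    cylProb (oStrat witness) w * (1 - 2 * t) ≤
      cylProb (oStrat witness) (w ++ List.replicate j false) := by
  obtain ⟨s, hs, hcons, -, hcyl⟩ := witness_replicate_false_of_waitDist hw ht hmem j
  rw [← hcyl]
  exact mul_le_of_le_one_right (cylProb_pos hcons).le (by linarith [hs.1])

end Witness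

/-- There exists a DDR strategy (deterministic initialisation and outputs,
randomised updates) in the one-state game with two actions that is not
outcome-equivalent to any RRD strategy (randomised initialisation and outputs,
deterministic updates). -/
theorem ddr_not_included_in_rrd :
    ∃ (n : ℕ) (N : OneMealy n), Proper N ∧ DetInit N ∧ DetNext N ∧
      ∀ (k : ℕ) (B : OneMealy k), Proper B → DetUp B → ¬ OEquiv N B := by
  refine ⟨4, witness, witness_proper, witness_detInit, witness_detNext, ?_⟩
  intro k B hB hdet hOE
  obtain ⟨w₀, hw₀⟩ := exists_isMinSupp B
  obtain ⟨t, ht, hw, hmem⟩ :=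
    witness_exists_waitDist_append_false (consistentW_of_oEquiv hOE.symm hw₀.1)
  have hmin : IsMinSupp B (w₀ ++ [false]) :=
    hw₀.append_singleton hdet (consistentW_of_oEquiv hOE hw)
  have hdecay := hmin.tendsto_cylProb_replicate_false hB hdet fun j =>
    consistentW_of_oEquiv hOE (witness_consistentW_replicate_false_append_true hw ht hmem j)
  have hpos : 0 < cylProb (oStrat witness) (w₀ ++ [false]) * (1 - 2 * t) :=
    mul_pos (cylProb_pos hw) (by linarith [ht.2])
  obtain ⟨j, hj⟩ := (hdecay.eventually (gt_mem_nhds hpos)).exists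
  rw [← hOE] at hj
  exact (witness_cylProb_replicate_false_ge hw ht hmem j).not_gt hj
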